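/- arXiv:0709.1563 — 5 statements merged into one kernel-verified Lean document; each statement's English description precedes it below -/
import Mathlib

section
/- Let A be a p×L complex matrix and let P be an L×r complex matrix. If the number of nonzero rows of P is at most the Kruskal rank of A (the maximal number q such that every set of q columns of A is linearly independent), then rank(P) = rank(A·P). -/
/-!
The columns of `A` indexed by the nonzero rows of `P` are linearly independent, and every vector
`P v` is supported on those rows, so `A` is injective on the column space of `P`. Hence
`ker (A P) = ker P`, and rank–nullity gives `rank (A P) = rank P`.
-/

open Matrix Set

/-- The Kruskal rank of a matrix `A`: the maximal number `q` such that every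
set of `q` columns of `A` is linearly independent. -/
noncomputable def kruskalRank {p L : ℕ} (A : Matrix (Fin p) (Fin L) ℂ) : ℕ :=
  sSup {q | q ≤ L ∧ ∀ S : Finset (Fin L), S.card = q →
    LinearIndependent ℂ (fun j : S => A.transpose (j : Fin L))}

namespace Matrix

variable {m n o R K : Type*}

theorem support_mulVec_subset [Fintype n] [NonUnitalNonAssocSemiring R] (P : Matrix m n R)
    (v : n → R) : Function.support (P *ᵥ v) ⊆ Function.support P := by
  intro k hk hPk
  exact hk (by simp [mulVec, hPk])

theorem mulVec_eq_linearCombination_col [Fintype n] [CommSemiring R] (A : Matrix m n R)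
    (w : n → R) :
    A *ᵥ w = Finsupp.linearCombination R A.col ((Finsupp.linearEquivFunOnFinite R R n).symm w) := by
  rw [Finsupp.linearCombination_eq_fintype_linearCombination_apply,
    Fintype.linearCombination_apply]
  ext i
  simp [mulVec, dotProduct, Finset.sum_apply, mul_comm]

theorem eq_zero_of_mulVec_eq_zero_of_linearIndepOn [Fintype n] [CommRing R] {A : Matrix m n R}
    {s : Set n} (hA : LinearIndepOn R A.col s) {w : n → R} (hw : Function.support w ⊆ s)
    (hAw : A *ᵥ w = 0) : w = 0 := by
  have hl := linearIndepOn_iff.mp hA _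
    ((Finsupp.mem_supported _ _).2 fun k hk => hw (by simpa using hk))
    ((A.mulVec_eq_linearCombination_col w).symm.trans hAw)
  simpa using hl

theorem rank_mul_eq_right_of_mulVec_eq_zero [Fintype n] [Fintype o] [Field K]
    {A : Matrix m n K} {P : Matrix n o K} (h : ∀ v, A *ᵥ (P *ᵥ v) = 0 → P *ᵥ v = 0) :
    (A * P).rank = P.rank := by
  have hker : LinearMap.ker (A * P).mulVecLin = LinearMap.ker P.mulVecLin := by
    ext v
    simp only [LinearMap.mem_ker, mulVecLin_apply, ← mulVec_mulVec]
    exact ⟨h v, fun hv => by rw [hv, mulVec_zero]⟩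
  have hAP := (A * P).mulVecLin.finrank_range_add_finrank_ker
  have hP := P.mulVecLin.finrank_range_add_finrank_ker
  rw [hker] at hAP
  rw [rank, rank]
  omega

end Matrix

theorem kruskalRank_mem {p L : ℕ} (A : Matrix (Fin p) (Fin L) ℂ) :
    kruskalRank A ∈ {q | q ≤ L ∧ ∀ S : Finset (Fin L), S.card = q →
      LinearIndependent ℂ (fun j : S => A.transpose (j : Fin L))} :=
  Nat.sSup_mem
    ⟨0, Nat.zero_le L, fun S hS => by
      rw [Finset.card_eq_zero.mp hS]
      exact linearIndependent_empty_type⟩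
    ⟨L, fun _ hq => hq.1⟩

theorem linearIndepOn_of_ncard_le_kruskalRank {p L : ℕ} (A : Matrix (Fin p) (Fin L) ℂ)
    {s : Set (Fin L)} (hs : s.ncard ≤ kruskalRank A) : LinearIndepOn ℂ A.col s := by
  classical
  obtain ⟨S, hsS, hS⟩ := Finset.exists_superset_card_eq (s := s.toFinset) (n := kruskalRank A)
    (by rwa [← Set.ncard_eq_toFinset_card']) (by simpa using (kruskalRank_mem A).1)
  exact LinearIndepOn.mono ((kruskalRank_mem A).2 S hS) (by simpa using hsS)

theorem stmt0 {p L r : ℕ} (A : Matrix (Fin p) (Fin L) ℂ) (P : Matrix (Fin L) (Fin r) ℂ)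
    (h : {k | P k ≠ 0}.ncard ≤ kruskalRank A) :
    P.rank = (A * P).rank :=
  (rank_mul_eq_right_of_mulVec_eq_zero fun v hv =>
    eq_zero_of_mulVec_eq_zero_of_linearIndepOn (linearIndepOn_of_ncard_le_kruskalRank A h)
      (P.support_mulVec_subset v) hv).symm
end

section
/- Let A be a p×L complex matrix with Kruskal rank σ(A). If x̄ is a solution of y = A·x and x̄ has at most σ(A)/2 nonzero entries, then x̄ is the unique solution of y = A·x with a minimal number of nonzero entries; moreover any other solution with at most σ(A)/2 nonzero entries equals x̄. -/
open Matrix Set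

/-! Two solutions of `A x = y` differ by a kernel vector supported on the union of their
supports. If both are `σ(A)/2`-sparse, that union indexes at most `σ(A)` columns, which are
linearly independent, so the kernel vector is zero. -/

theorem Matrix.eq_zero_of_mulVec_eq_zero_of_linearIndepOn_s1 {K m n : Type*} [CommRing K]
    [Fintype n] {A : Matrix m n K} {v : n → K}
    (hA : LinearIndepOn K (fun j => Aᵀ j) (Function.support v)) (hv : A *ᵥ v = 0) : v = 0 := by
  let l : n →₀ K := Finsupp.equivFunOnFinite.symm v
  have hl : l ∈ Finsupp.supported K K (Function.support v) := by
    simp [l, Finsupp.mem_supported]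
  have hcomb : Finsupp.linearCombination K (fun j => Aᵀ j) l = A *ᵥ v := by
    rw [Finsupp.linearCombination_apply, Finsupp.sum_fintype _ _ (by simp), mulVec_eq_sum]
    simp only [l, Finsupp.equivFunOnFinite_symm_apply_apply, op_smul_eq_smul]
  have hl0 := linearIndepOn_iff.mp hA l hl (hcomb.trans hv)
  exact funext fun j => by simpa [l] using DFunLike.congr_fun hl0 j

section KruskalRank

variable {p L : ℕ} (A : Matrix (Fin p) (Fin L) ℂ)

theorem kruskalRank_spec : kruskalRank A ≤ L ∧ ∀ S : Finset (Fin L),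
    S.card = kruskalRank A → LinearIndependent ℂ (fun j : S => Aᵀ (j : Fin L)) :=
  (Nat.sSup_mem ⟨0, Nat.zero_le _, fun S hS => by
      rw [Finset.card_eq_zero.mp hS]; exact linearIndependent_empty_type⟩
    ⟨L, fun _ hq => hq.1⟩ : kruskalRank A ∈ _)

theorem linearIndepOn_transpose_of_ncard_le_kruskalRank {S : Set (Fin L)}
    (hS : S.ncard ≤ kruskalRank A) : LinearIndepOn ℂ (fun j => Aᵀ j) S := by
  obtain ⟨F, rfl⟩ := S.toFinite.exists_finset_coe
  obtain ⟨hle, hind⟩ := kruskalRank_spec A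
  rw [ncard_coe_finset] at hS
  obtain ⟨T, hFT, hT⟩ := Finset.exists_superset_card_eq hS (by simpa using hle)
  exact LinearIndepOn.mono (hind T hT) (Finset.coe_subset.mpr hFT)

theorem eq_of_mulVec_eq_of_ncard_support_add_le_kruskalRank {x x' : Fin L → ℂ}
    (h : A *ᵥ x = A *ᵥ x')
    (hc : (Function.support x).ncard + (Function.support x').ncard ≤ kruskalRank A) :
    x = x' := by
  have hsupp : (Function.support (x - x')).ncard ≤ kruskalRank A :=
    calc (Function.support (x - x')).ncard
        ≤ (Function.support x ∪ Function.support x').ncard :=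
          ncard_le_ncard (Function.support_sub x x')
      _ ≤ (Function.support x).ncard + (Function.support x').ncard := ncard_union_le _ _
      _ ≤ kruskalRank A := hc
  refine sub_eq_zero.mp (eq_zero_of_mulVec_eq_zero_of_linearIndepOn_s1
    (linearIndepOn_transpose_of_ncard_le_kruskalRank A hsupp) ?_)
  rw [mulVec_sub, h, sub_self]

end KruskalRank

theorem stmt1 {p L : ℕ} (A : Matrix (Fin p) (Fin L) ℂ) (y : Fin p → ℂ) (xbar : Fin L → ℂ)
    (hsol : A.mulVec xbar = y)
    (hsparse : 2 * {i | xbar i ≠ 0}.ncard ≤ kruskalRank A) :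
    (∀ x : Fin L → ℂ, A.mulVec x = y → x ≠ xbar →
      {i | xbar i ≠ 0}.ncard < {i | x i ≠ 0}.ncard) ∧
    (∀ x : Fin L → ℂ, A.mulVec x = y → 2 * {i | x i ≠ 0}.ncard ≤ kruskalRank A →
      x = xbar) := by
  have huniq : ∀ x : Fin L → ℂ, A.mulVec x = y →
      {i | x i ≠ 0}.ncard + {i | xbar i ≠ 0}.ncard ≤ kruskalRank A → x = xbar :=
    fun x hx => eq_of_mulVec_eq_of_ncard_support_add_le_kruskalRank A (hx.trans hsol.symm)
  refine ⟨fun x hx hne => ?_, fun x hx hxs => huniq x hx (by omega)⟩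
  by_contra! hle
  exact hne (huniq x hx (by omega))
end

section
/- Let A be a p×L complex matrix, let P and P̃ be L×r complex matrices each having at most σ(A)/2 nonzero rows (where σ(A) is the Kruskal rank of A), and suppose (A·P)(A·P)ᴴ = (A·P̃)(A·P̃)ᴴ with A·P and A·P̃ having full column rank r. Then there exists a unitary r×r matrix R with P = P̃·R; in particular P·Pᴴ = P̃·P̃ᴴ. -/
open Matrix Set

/-!
Since `A * Pt` has full column rank, the Gram identity `B Bᴴ = C Cᴴ` (with `B = A P`,
`C = A Pt`) yields a unitary `R = (Cᴴ C)⁻¹ Cᴴ B` with `B = C R`. Then `A (P - Pt R) = 0`, and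
`P - Pt R` has at most `σ(A)` nonzero rows, so the corresponding columns of `A` are independent
and `P - Pt R = 0`.
-/

open scoped ComplexOrder

namespace Matrix

variable {K : Type*} {l m n : Type*} [Fintype n]

lemma isUnit_of_rank_eq_card [Field K] [DecidableEq n] {M : Matrix n n K}
    (h : M.rank = Fintype.card n) : IsUnit M := by
  have : LinearMap.range M.mulVecLin = ⊤ :=
    Submodule.eq_top_of_finrank_eq (by rw [← rank, h, Module.finrank_fintype_fun_eq_card])
  exact mulVec_surjective_iff_isUnit.mp (LinearMap.range_eq_top.mp this)

variable [Field K] [PartialOrder K] [StarRing K] [StarOrderedRing K] [Fintype m]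

lemma mul_eq_zero_of_mul_conjTranspose_eq {B C : Matrix m n K} (hBC : B * Bᴴ = C * Cᴴ)
    {X : Matrix l m K} (hXC : X * C = 0) : X * B = 0 := by
  rw [← mul_self_mul_conjTranspose_eq_zero, hBC, mul_self_mul_conjTranspose_eq_zero, hXC]

lemma exists_mem_unitaryGroup_eq_mul_of_mul_conjTranspose_eq [DecidableEq m] [DecidableEq n]
    {B C : Matrix m n K} (hC : C.rank = Fintype.card n) (hBC : B * Bᴴ = C * Cᴴ) :
    ∃ R ∈ unitaryGroup n K, B = C * R := by
  set G := Cᴴ * C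
  have hG : IsUnit G.det := (isUnit_iff_isUnit_det G).mp
    (isUnit_of_rank_eq_card (by rw [rank_conjTranspose_mul_self, hC]))
  have hGinv : G⁻¹ᴴ = G⁻¹ := (isHermitian_conjTranspose_mul_self C).inv
  refine ⟨G⁻¹ * Cᴴ * B, ?_, ?_⟩
  · rw [mem_unitaryGroup_iff, star_eq_conjTranspose]
    calc G⁻¹ * Cᴴ * B * (G⁻¹ * Cᴴ * B)ᴴ = G⁻¹ * G * (G * G⁻¹) := by
          simp only [conjTranspose_mul, conjTranspose_conjTranspose, hGinv, G, Matrix.mul_assoc]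
          rw [← Matrix.mul_assoc B, hBC]
          simp only [Matrix.mul_assoc]
      _ = 1 := by rw [nonsing_inv_mul _ hG, mul_nonsing_inv _ hG, Matrix.mul_one]
  · -- `1 - C G⁻¹ Cᴴ` is the orthogonal projection onto the complement of the range of `C`.
    have hproj : (1 - C * G⁻¹ * Cᴴ) * C = 0 := by
      rw [Matrix.sub_mul, Matrix.one_mul, Matrix.mul_assoc, Matrix.mul_assoc,
        nonsing_inv_mul _ hG, Matrix.mul_one, sub_self]
    have := mul_eq_zero_of_mul_conjTranspose_eq hBC hproj
    rw [Matrix.sub_mul, sub_eq_zero, Matrix.one_mul] at this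
    simpa only [Matrix.mul_assoc] using this

end Matrix

section KruskalRank

variable {p L : ℕ} (A : Matrix (Fin p) (Fin L) ℂ)

lemma linearIndepOn_transpose_of_card_le_kruskalRank {S : Finset (Fin L)}
    (hS : S.card ≤ kruskalRank A) : LinearIndepOn ℂ Aᵀ (S : Set (Fin L)) := by
  have hzero : 0 ∈ {q | q ≤ L ∧ ∀ S : Finset (Fin L), S.card = q →
      LinearIndependent ℂ (fun j : S => A.transpose (j : Fin L))} :=
    ⟨L.zero_le, fun S hS => by
      rw [Finset.card_eq_zero.mp hS]
      exact linearIndependent_empty_type⟩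
  obtain ⟨hle, hind⟩ := Nat.sSup_mem ⟨0, hzero⟩ ⟨L, fun q hq => hq.1⟩
  obtain ⟨T, hST, hT⟩ := Finset.exists_superset_card_eq hS (by rwa [Fintype.card_fin])
  exact LinearIndepOn.mono (hind T hT) (Finset.coe_subset.mpr hST)

lemma eq_zero_of_mul_eq_zero_of_ncard_le_kruskalRank {n : Type*} {D : Matrix (Fin L) n ℂ}
    (hD : {k | D k ≠ 0}.ncard ≤ kruskalRank A) (hAD : A * D = 0) : D = 0 := by
  classical
  set S := {k | D k ≠ 0}.toFinset
  have hind := linearIndepOn_finset_iff.mp <| linearIndepOn_transpose_of_card_le_kruskalRank A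
    (S := S) (by rwa [← Set.ncard_eq_toFinset_card'])
  ext k j
  by_cases hk : k ∈ S
  · refine hind (fun k => D k j) ?_ k hk
    rw [Finset.sum_subset S.subset_univ fun k _ hk => by simp_all [S]]
    ext i
    simpa [Finset.sum_apply, mul_apply, mul_comm] using congrFun (congrFun hAD i) j
  · simp_all [S]

end KruskalRank

theorem stmt8_general {p L r : ℕ} (A : Matrix (Fin p) (Fin L) ℂ)
    (P Pt : Matrix (Fin L) (Fin r) ℂ)
    (hPs : 2 * {k | P k ≠ 0}.ncard ≤ kruskalRank A)
    (hPts : 2 * {k | Pt k ≠ 0}.ncard ≤ kruskalRank A)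
    (hfullPt : (A * Pt).rank = r)
    (hGram : (A * P) * (A * P)ᴴ = (A * Pt) * (A * Pt)ᴴ) :
    (∃ R : Matrix (Fin r) (Fin r) ℂ, Rᴴ * R = 1 ∧ P = Pt * R) ∧
    P * Pᴴ = Pt * Ptᴴ := by
  obtain ⟨R, hR, hAPR⟩ := exists_mem_unitaryGroup_eq_mul_of_mul_conjTranspose_eq
    (by rwa [Fintype.card_fin]) hGram
  have hsupp : {k | (P - Pt * R) k ≠ 0} ⊆ {k | P k ≠ 0} ∪ {k | Pt k ≠ 0} := by
    intro k hk
    by_contra h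
    simp only [Set.mem_union, Set.mem_ofPred_eq, not_or, not_not] at h
    apply hk
    funext j
    simp [mul_apply, h.1, h.2]
  have hcard : {k | (P - Pt * R) k ≠ 0}.ncard ≤ kruskalRank A := by
    have := (Set.ncard_le_ncard hsupp).trans (Set.ncard_union_le _ _)
    omega
  have hP : P = Pt * R := sub_eq_zero.mp <| eq_zero_of_mul_eq_zero_of_ncard_le_kruskalRank A hcard
    (by rw [Matrix.mul_sub, ← Matrix.mul_assoc, ← hAPR, sub_self])
  refine ⟨⟨R, mem_unitaryGroup_iff'.mp hR, hP⟩, ?_⟩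
  rw [hP, conjTranspose_mul, Matrix.mul_assoc, ← Matrix.mul_assoc R, ← star_eq_conjTranspose,
    mem_unitaryGroup_iff.mp hR, Matrix.one_mul]

theorem stmt8 {p L r : ℕ} (A : Matrix (Fin p) (Fin L) ℂ)
    (P Pt : Matrix (Fin L) (Fin r) ℂ)
    (hPs : 2 * {k | P k ≠ 0}.ncard ≤ kruskalRank A)
    (hPts : 2 * {k | Pt k ≠ 0}.ncard ≤ kruskalRank A)
    (hfullP : (A * P).rank = r) (hfullPt : (A * Pt).rank = r)
    (hGram : (A * P) * (A * P)ᴴ = (A * Pt) * (A * Pt)ᴴ) :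
    (∃ R : Matrix (Fin r) (Fin r) ℂ, Rᴴ * R = 1 ∧ P = Pt * R) ∧
    P * Pᴴ = Pt * Ptᴴ :=
  stmt8_general A P Pt hPs hPts hfullPt hGram
end

section
/- Let A be a p×L complex matrix whose entries are A_{ik} = (1/(LT))·exp(j·(2π/L)·c_i·k) for 0 ≤ k ≤ L−1 and a sampling pattern 0 ≤ c₁ < c₂ < ... < c_p ≤ L−1, with T > 0. If L is prime, then every set of min(p, L) columns of A is linearly independent; i.e., the Kruskal rank of A equals p (assuming p ≤ L). -/
/-!
For injective `a b : Fin n → Fin L` with `L` prime, the minor `det (ζ ^ (a i * b j))` of the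
DFT matrix is the value at `ζ` of `P = det (X ^ (a i * b j)) ∈ ℤ[X]`. Applying `θ ^ r`, where
`θ = X • d/dX` is the Euler operator, and evaluating at `1` gives
`∑ σ, sgn σ * (∑ j, a (σ j) * b j) ^ r`. After the multinomial expansion only exponent
vectors that are permutations of `0, …, n - 1` survive, so these values vanish for
`r < m = ∑ j < n, j`, and for `r = m` they equal `multinomial * V(a) * V(b)` with Vandermonde
determinants `V`. Hence `P = (X - 1) ^ m * q` with `(∏ j < n, j!) * q(1) = V(a) * V(b)`.
If `P(ζ) = 0` then `q(ζ) = 0`, so `Φ_L ∣ q` and `L = Φ_L(1)` divides `q(1)`, whereas `L`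
divides neither Vandermonde determinant.
-/

open Matrix Set

open Polynomial Finset Function

namespace Polynomial

variable {R : Type*} [CommRing R]

noncomputable def eulerOperator : R[X] →ₗ[R] R[X] := LinearMap.mulLeft R X ∘ₗ derivative

theorem eulerOperator_apply (p : R[X]) : eulerOperator p = X * derivative p := rfl

theorem eulerOperator_pow_C_mul (r : ℕ) (a : R) (p : R[X]) :
    (eulerOperator ^ r) (C a * p) = C a * (eulerOperator ^ r) p := by
  rw [← smul_eq_C_mul, map_smul, smul_eq_C_mul]

theorem eulerOperator_X_pow (e : ℕ) : eulerOperator (X ^ e : R[X]) = C (e : R) * X ^ e := by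
  cases e with
  | zero => simp [eulerOperator_apply]
  | succ e =>
    rw [eulerOperator_apply, derivative_X_pow, Nat.add_sub_cancel, mul_left_comm, ← pow_succ',
      C_eq_natCast]

theorem eulerOperator_pow_X_pow (r e : ℕ) :
    (eulerOperator ^ r) (X ^ e : R[X]) = C ((e : R) ^ r) * X ^ e := by
  induction r with
  | zero => simp
  | succ r ih =>
    rw [pow_succ, Module.End.mul_apply, eulerOperator_X_pow, eulerOperator_pow_C_mul, ih,
      ← mul_assoc, ← C_mul, pow_succ']

theorem eval_one_eulerOperator_pow_X_sub_one_pow_mul (m : ℕ) (q : R[X]) :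
    ((eulerOperator ^ m) ((X - 1) ^ m * q)).eval 1 = m.factorial * q.eval 1 := by
  induction m generalizing q with
  | zero => simp
  | succ m ih =>
    have key : eulerOperator ((X - 1) ^ (m + 1) * q)
        = (X - 1) ^ m * (C ((m : R) + 1) * X * q + X * (X - 1) * derivative q) := by
      simp only [eulerOperator_apply, derivative_mul, derivative_pow, derivative_sub,
        derivative_X, derivative_one]
      push_cast
      ring
    rw [pow_succ, Module.End.mul_apply, key, ih]
    simp only [eval_add, eval_mul, eval_C, eval_X, eval_sub, eval_one]
    push_cast [Nat.factorial_succ]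
    ring

theorem X_sub_one_pow_dvd_of_eval_one_eulerOperator_pow [IsDomain R] [CharZero R] {m : ℕ}
    {p : R[X]} (h : ∀ r < m, ((eulerOperator ^ r) p).eval 1 = 0) : (X - 1) ^ m ∣ p := by
  induction m with
  | zero => simp
  | succ m ih =>
    obtain ⟨q, rfl⟩ := ih fun r hr => h r (hr.trans m.lt_succ_self)
    have hq : q.eval 1 = 0 := by
      have := h m m.lt_succ_self
      rwa [eval_one_eulerOperator_pow_X_sub_one_pow_mul, mul_eq_zero,
        or_iff_right (by exact_mod_cast m.factorial_ne_zero)] at this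
    obtain ⟨s, rfl⟩ := dvd_iff_isRoot.mpr hq
    exact ⟨s, by rw [C_1]; ring⟩

end Polynomial

theorem Fin.val_le_of_strictMono {n : ℕ} {g : Fin n → ℕ} (hg : StrictMono g) (k : Fin n) :
    (k : ℕ) ≤ g k := by
  obtain ⟨k, hk⟩ := k
  induction k with
  | zero => exact Nat.zero_le _
  | succ k ih =>
    have := hg (show (⟨k, by omega⟩ : Fin n) < ⟨k + 1, hk⟩ from Nat.lt_succ_self k)
    have := ih (by omega)
    simp only at this ⊢
    omega

theorem Fin.exists_perm_of_injective_of_sum_le {n : ℕ} {f : Fin n → ℕ} (hf : Injective f)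
    (hsum : ∑ j, f j ≤ ∑ j : Fin n, (j : ℕ)) :
    ∃ τ : Equiv.Perm (Fin n), ∀ j, f j = τ j := by
  set s := Finset.univ.image f
  have hs : s.card = n := by simp [s, Finset.card_image_of_injective _ hf]
  set g := s.orderEmbOfFin hs
  have hg : ∀ k : Fin n, g k = k := by
    have hfs : ∑ x ∈ s, x = ∑ j, f j := Finset.sum_image fun x _ y _ h => hf h
    have hgs : ∑ x ∈ s, x = ∑ k, g k := by
      conv_lhs => rw [← image_orderEmbOfFin_univ s hs]
      exact Finset.sum_image fun x _ y _ h => g.injective h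
    have hle := Fin.val_le_of_strictMono g.strictMono
    have hsum' : ∑ k : Fin n, (k : ℕ) = ∑ k, g k :=
      le_antisymm (Finset.sum_le_sum fun k _ => hle k) (by omega)
    exact fun k => ((Finset.sum_eq_sum_iff_of_le fun k _ => hle k).mp hsum' k (mem_univ k)).symm
  have hlt : ∀ j, f j < n := by
    intro j
    have hj : f j ∈ s := Finset.mem_image_of_mem f (mem_univ j)
    rw [← image_orderEmbOfFin_univ s hs] at hj
    obtain ⟨k, -, hk⟩ := Finset.mem_image.mp hj
    rw [← hk, hg]
    exact k.isLt
  exact ⟨Equiv.ofBijective (fun j => ⟨f j, hlt j⟩)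
    (Finite.injective_iff_bijective.mp fun i j h => hf (congrArg Fin.val h)), fun j => rfl⟩

section DFTMinor

variable {R : Type*} [CommRing R] {n : ℕ}

theorem Matrix.det_of_pow_eq_zero_of_not_injective (x : Fin n → R) {f : Fin n → ℕ}
    (hf : ¬ Injective f) : det (of fun i u => x i ^ f u) = 0 := by
  obtain ⟨u, v, huv, hne⟩ := Function.not_injective_iff.mp hf
  exact det_zero_of_column_eq hne fun i => by simp [huv]

theorem Matrix.det_of_pow_perm (x : Fin n → R) (τ : Equiv.Perm (Fin n)) :
    det (of fun i u => x i ^ (τ u : ℕ)) = Equiv.Perm.sign τ * det (vandermonde x) := by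
  rw [← det_permute']
  rfl

theorem Matrix.det_vandermonde_eq_sum_perm (x : Fin n → R) :
    det (vandermonde x) =
      ∑ τ : Equiv.Perm (Fin n), Equiv.Perm.sign τ * ∏ j, x j ^ (τ j : ℕ) := by
  rw [← det_transpose, det_apply']
  rfl

noncomputable def dftMinorPoly (a b : Fin n → ℕ) : R[X] := det (of fun i j => X ^ (a i * b j))

theorem aeval_dftMinorPoly {S : Type*} [CommRing S] [Algebra R S] (x : S) (a b : Fin n → ℕ) :
    aeval x (dftMinorPoly (R := R) a b) = det (of fun i j => x ^ (a i * b j)) := by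
  rw [dftMinorPoly, AlgHom.map_det]
  congr 1
  ext i j
  simp

theorem eval_one_eulerOperator_pow_dftMinorPoly (a b : Fin n → ℕ) (r : ℕ) :
    ((eulerOperator ^ r) (dftMinorPoly (R := R) a b)).eval 1
      = ∑ f ∈ piAntidiag Finset.univ r, (Nat.multinomial Finset.univ f : R) *
          (∏ j, (b j : R) ^ f j) * det (of fun i u => (a i : R) ^ f u) := by
  have hσ : ∀ σ : Equiv.Perm (Fin n),
      ((eulerOperator ^ r) (C (Equiv.Perm.sign σ : R) * ∏ j, X ^ (a (σ j) * b j))).eval 1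
        = Equiv.Perm.sign σ * (∑ j, (a (σ j) : R) * b j) ^ r := by
    intro σ
    rw [prod_pow_eq_pow_sum, eulerOperator_pow_C_mul, eulerOperator_pow_X_pow]
    simp [eval_finsetSum]
  simp_rw [dftMinorPoly, det_apply', of_apply, ← C_eq_intCast, map_sum, eval_finsetSum, hσ,
    sum_pow_eq_sum_piAntidiag, Finset.mul_sum]
  rw [Finset.sum_comm]
  refine Finset.sum_congr rfl fun f _ => ?_
  refine Finset.sum_congr rfl fun σ _ => ?_
  simp only [mul_pow, Finset.prod_mul_distrib]
  ring

theorem eval_one_eulerOperator_pow_dftMinorPoly_of_lt (a b : Fin n → ℕ) {r : ℕ}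
    (hr : r < ∑ j : Fin n, (j : ℕ)) :
    ((eulerOperator ^ r) (dftMinorPoly (R := R) a b)).eval 1 = 0 := by
  rw [eval_one_eulerOperator_pow_dftMinorPoly]
  refine Finset.sum_eq_zero fun f hf => ?_
  have hfr : ∑ j, f j = r := (mem_piAntidiag.mp hf).1
  have hf : ¬ Injective f := fun hf => by
    obtain ⟨τ, hτ⟩ := Fin.exists_perm_of_injective_of_sum_le hf (by omega)
    have := Equiv.sum_comp τ (fun j => (j : ℕ))
    simp only [← hτ] at this
    omega
  rw [det_of_pow_eq_zero_of_not_injective _ hf, mul_zero]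

theorem eval_one_eulerOperator_pow_dftMinorPoly_sum_val (a b : Fin n → ℕ) :
    ((eulerOperator ^ ∑ j : Fin n, (j : ℕ)) (dftMinorPoly (R := R) a b)).eval 1
      = Nat.multinomial Finset.univ (fun j : Fin n => (j : ℕ)) *
          det (vandermonde fun i => (a i : R)) * det (vandermonde fun j => (b j : R)) := by
  set m := ∑ j : Fin n, (j : ℕ)
  have hperm : ∀ τ : Equiv.Perm (Fin n), ∑ j, (τ j : ℕ) = m := fun τ =>
    Equiv.sum_comp τ (fun j => (j : ℕ))
  have hsub : Finset.univ.image (fun (τ : Equiv.Perm (Fin n)) j => (τ j : ℕ))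
      ⊆ piAntidiag Finset.univ m := by
    simp [Finset.subset_iff, hperm]
  rw [eval_one_eulerOperator_pow_dftMinorPoly, ← Finset.sum_subset hsub, Finset.sum_image]
  · have hmult : ∀ τ : Equiv.Perm (Fin n), Nat.multinomial Finset.univ (fun j => (τ j : ℕ))
        = Nat.multinomial Finset.univ (fun j : Fin n => (j : ℕ)) := fun τ => by
      rw [Nat.multinomial, Nat.multinomial, hperm,
        Equiv.prod_comp τ (fun j : Fin n => (j : ℕ).factorial)]
    simp only [hmult, det_of_pow_perm, det_vandermonde_eq_sum_perm (fun j => (b j : R)),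
      Finset.mul_sum]
    exact Finset.sum_congr rfl fun τ _ => by ring
  · exact fun τ _ τ' _ h => Equiv.ext fun j => Fin.ext (congrFun h j)
  · intro f hf hfτ
    have hf : ¬ Injective f := fun hinj => hfτ <| by
      obtain ⟨τ, hτ⟩ :=
        Fin.exists_perm_of_injective_of_sum_le hinj (mem_piAntidiag.mp hf).1.le
      exact Finset.mem_image.mpr ⟨τ, mem_univ τ, funext fun j => (hτ j).symm⟩
    rw [det_of_pow_eq_zero_of_not_injective _ hf, mul_zero]

end DFTMinor

theorem Matrix.not_dvd_det_vandermonde {L n : ℕ} (hL : L.Prime) {a : Fin n → Fin L}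
    (ha : Injective a) : ¬ (L : ℤ) ∣ det (vandermonde fun i => ((a i : ℕ) : ℤ)) := by
  have hLZ : Prime (L : ℤ) := Nat.prime_iff_prime_int.mp hL
  simp only [det_vandermonde, hLZ.dvd_finsetProd_iff, not_exists, not_and]
  intro i _ j hij hdvd
  have hai := (a i).isLt
  have haj := (a j).isLt
  have := Int.eq_zero_of_abs_lt_dvd hdvd (abs_lt.mpr ⟨by omega, by omega⟩)
  exact (mem_Ioi.mp hij).ne (ha (Fin.ext (by omega))).symm

theorem Matrix.det_primitiveRoot_pow_mul_ne_zero {K : Type*} [Field K] [CharZero K] {L n : ℕ}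
    (hL : L.Prime) {ζ : K} (hζ : IsPrimitiveRoot ζ L) {a b : Fin n → Fin L}
    (ha : Injective a) (hb : Injective b) :
    det (of fun i j => ζ ^ ((a i : ℕ) * (b j : ℕ))) ≠ 0 := by
  have : Fact L.Prime := ⟨hL⟩
  set m := ∑ j : Fin n, (j : ℕ)
  set P : ℤ[X] := dftMinorPoly (fun i => (a i : ℕ)) (fun j => (b j : ℕ))
  obtain ⟨q, hPq⟩ : (X - 1) ^ m ∣ P := X_sub_one_pow_dvd_of_eval_one_eulerOperator_pow
    fun r hr => eval_one_eulerOperator_pow_dftMinorPoly_of_lt _ _ hr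
  have hq : (∏ j : Fin n, (j : ℕ).factorial : ℤ) * q.eval 1
      = det (vandermonde fun i => ((a i : ℕ) : ℤ)) *
          det (vandermonde fun j => ((b j : ℕ) : ℤ)) := by
    have h := eval_one_eulerOperator_pow_dftMinorPoly_sum_val (R := ℤ)
      (fun i => (a i : ℕ)) (fun j => (b j : ℕ))
    change ((eulerOperator ^ m) P).eval 1 = _ at h
    rw [hPq, eval_one_eulerOperator_pow_X_sub_one_pow_mul, ← Nat.multinomial_spec] at h
    push_cast at h
    refine mul_left_cancel₀ (Nat.cast_ne_zero.mpr
      (Nat.multinomial_pos Finset.univ (fun j : Fin n => (j : ℕ))).ne') ?_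
    linear_combination h
  intro h0
  have hqζ : aeval ζ q = 0 := by
    have hPζ : aeval ζ P = 0 := (aeval_dftMinorPoly ζ _ _).trans h0
    rwa [hPq, map_mul, map_pow, map_sub, aeval_X, map_one, mul_eq_zero,
      or_iff_right (pow_ne_zero _ (sub_ne_zero.mpr (hζ.ne_one hL.one_lt)))] at hPζ
  have hLq : (L : ℤ) ∣ q.eval 1 := by
    obtain ⟨t, ht⟩ : cyclotomic L ℤ ∣ q := by
      rw [cyclotomic_eq_minpoly hζ hL.pos]
      exact minpoly.isIntegrallyClosed_dvd (hζ.isIntegral hL.pos) hqζ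
    exact ⟨t.eval 1, by rw [ht, eval_mul, eval_one_cyclotomic_prime]⟩
  rcases (Nat.prime_iff_prime_int.mp hL).dvd_or_dvd (hq ▸ dvd_mul_of_dvd_right hLq _) with h | h
  · exact not_dvd_det_vandermonde hL ha h
  · exact not_dvd_det_vandermonde hL hb h

theorem Matrix.linearIndependent_cols_of_det_submatrix_ne_zero {K ι : Type*} [Field K] {m : ℕ}
    {A : Matrix (Fin m) ι K}
    (h : ∀ b : Fin m → ι, Injective b → det (A.submatrix id b) ≠ 0)
    {S : Finset ι} (hS : S.card = m) : LinearIndependent K (fun j : S => Aᵀ j) := by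
  set e := S.equivFinOfCardEq hS
  rw [← linearIndependent_equiv e.symm]
  have hb : Injective fun j => (e.symm j : ι) := Subtype.val_injective.comp e.symm.injective
  exact linearIndependent_cols_iff_isUnit.mpr <|
    (isUnit_iff_isUnit_det _).mpr (isUnit_iff_ne_zero.mpr (h _ hb))

theorem kruskalRank_eq_of_forall_card_eq {p L : ℕ} {A : Matrix (Fin p) (Fin L) ℂ} (hp : p ≤ L)
    (h : ∀ S : Finset (Fin L), S.card = p → LinearIndependent ℂ (fun j : S => Aᵀ j)) :
    kruskalRank A = p := by
  suffices {q | q ≤ L ∧ ∀ S : Finset (Fin L), S.card = q →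
      LinearIndependent ℂ (fun j : S => Aᵀ j)} = Set.Iic p by
    rw [kruskalRank, this, csSup_Iic]
  ext q
  refine ⟨fun ⟨hqL, hq⟩ => ?_, fun hqp => ⟨hqp.trans hp, fun S hS => ?_⟩⟩
  · obtain ⟨S, -, hS⟩ := Finset.exists_subset_card_eq (s := (Finset.univ : Finset (Fin L)))
      (by simpa using hqL)
    simpa [hS] using (hq S hS).fintype_card_le_finrank
  · obtain ⟨S', hSS', -, hS'⟩ := Finset.exists_subsuperset_card_eq (Finset.subset_univ S)
      (hS.trans_le hqp) (by simpa using hp)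
    exact (h S' hS').comp (Set.inclusion hSS') (Set.inclusion_injective hSS')

theorem Complex.exp_mul_two_pi_div_mul_mul (L c k : ℕ) :
    exp (I * (2 * Real.pi / L) * c * k) = exp (2 * Real.pi * I / L) ^ (c * k) := by
  rw [← exp_nat_mul]
  push_cast
  ring_nf

theorem stmt11 {p L : ℕ} (T : ℝ) (hT : 0 < T) (hL : Nat.Prime L) (hp : p ≤ L)
    (c : Fin p → Fin L) (hc : StrictMono c)
    (A : Matrix (Fin p) (Fin L) ℂ)
    (hA : ∀ (i : Fin p) (k : Fin L),
      A i k = ((1 / (L * T) : ℝ) : ℂ) *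
        Complex.exp (Complex.I * (2 * Real.pi / L) * ((c i : ℕ) : ℂ) * ((k : ℕ) : ℂ))) :
    (∀ S : Finset (Fin L), S.card = min p L →
      LinearIndependent ℂ (fun j : S => A.transpose (j : Fin L))) ∧
    kruskalRank A = p := by
  set κ : ℂ := ((1 / (L * T) : ℝ) : ℂ)
  set ζ : ℂ := Complex.exp (2 * Real.pi * Complex.I / L)
  have hκ : κ ≠ 0 := by
    have : (L : ℝ) * T ≠ 0 := by have := hL.pos; positivity
    simpa [κ, and_comm] using this
  have hminor : ∀ b : Fin p → Fin L, Injective b → det (A.submatrix id b) ≠ 0 := by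
    intro b hb
    have hAb : A.submatrix id b = κ • of fun i j => ζ ^ ((c i : ℕ) * (b j : ℕ)) := by
      ext i j
      simp [hA, κ, ζ, Complex.exp_mul_two_pi_div_mul_mul]
    rw [hAb, det_smul]
    exact mul_ne_zero (pow_ne_zero _ hκ) <| det_primitiveRoot_pow_mul_ne_zero hL
      (Complex.isPrimitiveRoot_exp L hL.ne_zero) hc.injective hb
  have hcols : ∀ S : Finset (Fin L), S.card = p → LinearIndependent ℂ (fun j : S => Aᵀ j) :=
    fun S => linearIndependent_cols_of_det_submatrix_ne_zero hminor
  exact ⟨fun S hS => hcols S (hS.trans (min_eq_left hp)),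
    kruskalRank_eq_of_forall_card_eq hp hcols⟩
end

section
/- Let x(f), f ∈ [0, 1/T], be the Fourier transform of a signal whose support is a union of N intervals each of width at most B, and let L ≤ 1/(BT). Define the vector-valued function x(f) ∈ ℂᴸ by x_i(f) = X(f + i/(LT)) for f ∈ [0, 1/(LT)). Then the diversity set S = ⋃_{f ∈ [0,1/(LT))} I(x(f)) satisfies |S| ≤ 2N. -/
/-! With `s = L T`, the index `i` of a frequency `f + i / s` with `f ∈ [0, 1/s)` is `⌊s (f + i/s)⌋₊`.
A band `[aₙ, bₙ]` has length at most `B ≤ 1/s`, so `s · [aₙ, bₙ]` has length at most one and meets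
at most the two cells `⌊s aₙ⌋₊` and `⌊s aₙ⌋₊ + 1`. Hence every index in the diversity set is one
of the `2N` numbers `⌊s aₙ⌋₊ + k`, `k ∈ {0, 1}`. -/

open Set

section Floor

variable {α : Type*} [Field α] [LinearOrder α] [IsStrictOrderedRing α] [FloorSemiring α]

lemma Nat.floor_eq_or_eq_succ_of_le_add_one {x y : α} (hx : 0 ≤ x) (hxy : x ≤ y)
    (hyx : y ≤ x + 1) : ⌊y⌋₊ = ⌊x⌋₊ ∨ ⌊y⌋₊ = ⌊x⌋₊ + 1 := by
  have hlow := Nat.floor_le_floor hxy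
  have hhigh : ⌊y⌋₊ ≤ ⌊x⌋₊ + 1 := Nat.floor_add_one hx ▸ Nat.floor_le_floor hyx
  omega

lemma Nat.floor_mul_eq_or_eq_succ_of_mem_Icc {s a b y : α} (hs : 0 ≤ s) (ha : 0 ≤ a)
    (hy : y ∈ Icc a b) (hlen : s * (b - a) ≤ 1) :
    ⌊s * y⌋₊ = ⌊s * a⌋₊ ∨ ⌊s * y⌋₊ = ⌊s * a⌋₊ + 1 := by
  refine Nat.floor_eq_or_eq_succ_of_le_add_one (mul_nonneg hs ha)
    (mul_le_mul_of_nonneg_left hy.1 hs) ?_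
  nlinarith [mul_le_mul_of_nonneg_left hy.2 hs]

lemma Nat.floor_mul_add_natCast_div {s f : α} (hs : 0 < s) (hf : f ∈ Ico 0 (1 / s)) (i : ℕ) :
    ⌊s * (f + i / s)⌋₊ = i := by
  have hsf : s * f < 1 := by
    have := (lt_div_iff₀ hs).mp hf.2
    linarith
  rw [mul_add, mul_div_cancel₀ _ hs.ne', Nat.floor_add_natCast (mul_nonneg hs.le hf.1),
    Nat.floor_eq_zero.mpr hsf, zero_add]

end Floor

lemma Set.ncard_range_union_range_le {ι β : Type*} [Finite ι] (c d : ι → β) :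
    (range c ∪ range d).ncard ≤ 2 * Nat.card ι := by
  have hrange (g : ι → β) : (range g).ncard ≤ Nat.card ι := by
    simpa [← image_univ, ncard_univ] using ncard_image_le (f := g) (s := univ)
  linarith [ncard_union_le (range c) (range d), hrange c, hrange d]

theorem stmt16 (B T : ℝ) (L N : ℕ) (hB : 0 < B) (hT : 0 < T) (hL : 0 < L)
    (hLBT : (L : ℝ) ≤ 1 / (B * T))
    (X : ℝ → ℂ) (a b : Fin N → ℝ)
    (hband : ∀ n : Fin N, a n ≤ b n ∧ 0 ≤ a n ∧ b n ≤ 1 / T ∧ b n - a n ≤ B)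
    (hsupp : ∀ f : ℝ, X f ≠ 0 → ∃ n : Fin N, f ∈ Set.Icc (a n) (b n)) :
    {i : Fin L | ∃ f ∈ Set.Ico (0 : ℝ) (1 / (L * T)),
      X (f + (i : ℝ) / (L * T)) ≠ 0}.ncard ≤ 2 * N := by
  set S := {i : Fin L | ∃ f ∈ Set.Ico (0 : ℝ) (1 / (L * T)), X (f + (i : ℝ) / (L * T)) ≠ 0}
  have hs : (0 : ℝ) < L * T := by positivity
  have hsB : (L * T : ℝ) * B ≤ 1 := by
    rw [le_div_iff₀ (by positivity)] at hLBT
    linarith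
  set c : Fin N → ℕ := fun n ↦ ⌊(L * T : ℝ) * a n⌋₊
  have hcells : Fin.val '' S ⊆ range c ∪ range (c · + 1) := by
    rintro _ ⟨i, ⟨f, hf, hX⟩, rfl⟩
    obtain ⟨n, hn⟩ := hsupp _ hX
    obtain ⟨-, ha, -, hlen⟩ := hband n
    have hcell := Nat.floor_mul_eq_or_eq_succ_of_mem_Icc hs.le ha hn
      (by nlinarith [mul_le_mul_of_nonneg_left hlen hs.le])
    rw [Nat.floor_mul_add_natCast_div hs hf] at hcell
    rcases hcell with h | h
    exacts [Or.inl ⟨n, h.symm⟩, Or.inr ⟨n, h.symm⟩]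
  calc S.ncard = (Fin.val '' S).ncard := (ncard_image_of_injective _ Fin.val_injective).symm
    _ ≤ (range c ∪ range (c · + 1)).ncard :=
      ncard_le_ncard hcells ((finite_range _).union (finite_range _))
    _ ≤ 2 * N := by simpa using ncard_range_union_range_le c (c · + 1)
end
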